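/- arXiv:2503.23423 — 2 statements merged into one kernel-verified Lean document; each statement's English description precedes it below -/
import Mathlib

section
/- Let φ be a right-continuous comparison function and f : X → X a φ-contraction on a semi-metric space. If H ⊆ X satisfies 0 < χ(H) < ∞, then χ(f(H)) < χ(H). -/
open Filter Topology Set

noncomputable section

/-- A semi-metric: symmetric, vanishing exactly on the diagonal (no triangle inequality). -/
def IsSemiMetric {X : Type*} (d : X → X → NNReal) : Prop :=
  (∀ x y, d x y = d y x) ∧ ∀ x y, d x y = 0 ↔ x = y

/-- Ball of radius `r` around `x`. -/
def SMBall {X : Type*} (d : X → X → NNReal) (x : X) (r : NNReal) : Set X := {y | d x y < r}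

/-- The basic triangle function `Φ_d(u,v) = sup{d(x,y) : ∃ z, d(x,z) ≤ u, d(y,z) ≤ v}`. -/
def SMPhi {X : Type*} (d : X → X → NNReal) (u v : NNReal) : ENNReal :=
  ⨆ (p : X × X) (_ : ∃ z : X, d p.1 z ≤ u ∧ d p.2 z ≤ v), (d p.1 p.2 : ENNReal)

/-- Normal property: the basic triangle function is finite-valued. -/
def SMNormal {X : Type*} (d : X → X → NNReal) : Prop := ∀ u v : NNReal, SMPhi d u v < ⊤

/-- Regular property: the basic triangle function is continuous at `(0,0)`. -/
def SMRegular {X : Type*} (d : X → X → NNReal) : Prop :=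
  ∀ ε : NNReal, 0 < ε → ∃ δ : NNReal, 0 < δ ∧
    ∀ u v : NNReal, u ≤ δ → v ≤ δ → SMPhi d u v < (ε : ENNReal)

/-- Cauchy sequence with respect to a semi- or pre-metric. -/
def SMCauchy {X : Type*} (d : X → X → NNReal) (x : ℕ → X) : Prop :=
  ∀ ε : NNReal, 0 < ε → ∃ N : ℕ, ∀ m ≥ N, ∀ n ≥ N, d (x m) (x n) < ε

/-- Completeness: every Cauchy sequence converges. -/
def SMComplete {X : Type*} (d : X → X → NNReal) : Prop :=
  ∀ x : ℕ → X, SMCauchy d x → ∃ l : X, Tendsto (fun n => d (x n) l) atTop (𝓝 0)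

/-- Boundedness: contained in some ball. -/
def SMBounded {X : Type*} (d : X → X → NNReal) (H : Set X) : Prop :=
  ∃ (x₀ : X) (r : NNReal), H ⊆ SMBall d x₀ r

/-- Comparison function: increasing, with iterates tending to zero on `(0,∞)`. -/
def SMComparison (φ : NNReal → NNReal) : Prop :=
  Monotone φ ∧ ∀ t : NNReal, 0 < t → Tendsto (fun n => φ^[n] t) atTop (𝓝 0)

/-- Right-continuity of a function `[0,∞) → [0,∞)`. -/
def SMRightCont (φ : NNReal → NNReal) : Prop :=
  ∀ t : NNReal, ContinuousWithinAt φ (Ici t) t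

/-- Diameter of a set. -/
def SMdiam {X : Type*} (d : X → X → NNReal) (H : Set X) : ENNReal :=
  ⨆ (x ∈ H) (y ∈ H), (d x y : ENNReal)

/-- `r`-neighborhood of a set. -/
def SMnbhd {X : Type*} (d : X → X → NNReal) (A : Set X) (r : NNReal) : Set X :=
  ⋃ x ∈ A, SMBall d x r

/-- Kuratowski measure of non-compactness. -/
def SMchi {X : Type*} (d : X → X → NNReal) (H : Set X) : ENNReal :=
  sInf {c : ENNReal | ∃ r : NNReal, c = (r : ENNReal) ∧ 0 < r ∧
    ∃ s : Finset X, H ⊆ ⋃ x ∈ s, SMBall d x r}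

/-- Hausdorff-Pompeiu distance between subsets. -/
def SMdHP {X : Type*} (d : X → X → NNReal) (A B : Set X) : ENNReal :=
  sInf {c : ENNReal | ∃ r : NNReal, c = (r : ENNReal) ∧ 0 < r ∧
    A ⊆ SMnbhd d B r ∧ B ⊆ SMnbhd d A r}

/-- Open sets of the semi-metric topology. -/
def SMOpen {X : Type*} (d : X → X → NNReal) (U : Set X) : Prop :=
  ∀ x ∈ U, ∃ r : NNReal, 0 < r ∧ SMBall d x r ⊆ U

/-- Closed sets of the semi-metric topology. -/
def SMClosed {X : Type*} (d : X → X → NNReal) (A : Set X) : Prop := SMOpen d Aᶜ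

/-- Max semi-metric on `X^q`. -/
def SMmax {X : Type*} (q : ℕ) (d : X → X → NNReal) (x y : Fin q → X) : NNReal :=
  Finset.univ.sup fun i => d (x i) (y i)

/-
For a comparison function `φ(t) < t` whenever `t > 0`, since otherwise the iterates `φⁿ t` would
stay above `t`. A finite cover of `H` by balls of radius `r` is mapped by `f` onto a cover of
`f(H)` by balls of any radius exceeding `φ(r)`, so `χ(f(H)) ≤ φ(r)` for every such `r`. Letting
`r` decrease to `χ(H)`, right continuity of `φ` gives `χ(f(H)) ≤ φ(χ(H)) < χ(H)`.
-/

theorem SMComparison.apply_lt {φ : NNReal → NNReal} (hφ : SMComparison φ) {t : NNReal}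
    (ht : 0 < t) : φ t < t := by
  by_contra! h
  have hiter : ∀ n, t ≤ φ^[n] t := by
    intro n
    induction n with
    | zero => exact le_rfl
    | succ n ih =>
      rw [Function.iterate_succ_apply']
      exact h.trans (hφ.1 ih)
  obtain ⟨n, hn⟩ := ((hφ.2 t ht).eventually (gt_mem_nhds ht)).exists
  exact (hiter n).not_gt hn

section Covers

variable {X : Type*} {d : X → X → NNReal} {H : Set X} {φ : NNReal → NNReal} {f : X → X}

theorem SMchi_le_of_subset_iUnion_ball {r : NNReal} (hr : 0 < r) {s : Finset X}
    (hcov : H ⊆ ⋃ x ∈ s, SMBall d x r) : SMchi d H ≤ r :=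
  sInf_le ⟨r, rfl, hr, s, hcov⟩

theorem exists_cover_of_SMchi_lt {b : ENNReal} (hb : SMchi d H < b) :
    ∃ r : NNReal, 0 < r ∧ (r : ENNReal) < b ∧
      ∃ s : Finset X, H ⊆ ⋃ x ∈ s, SMBall d x r := by
  obtain ⟨_, ⟨r, rfl, hr, hcov⟩, hrb⟩ := sInf_lt_iff.mp hb
  exact ⟨r, hr, hrb, hcov⟩

theorem image_subset_iUnion_ball [DecidableEq X] (hφ : Monotone φ)
    (hf : ∀ x y, d (f x) (f y) ≤ φ (d x y)) {r r' : NNReal} (hrr' : φ r < r') {s : Finset X}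
    (hcov : H ⊆ ⋃ x ∈ s, SMBall d x r) : f '' H ⊆ ⋃ x ∈ s.image f, SMBall d x r' := by
  rintro _ ⟨z, hz, rfl⟩
  obtain ⟨x, hx, hxz⟩ := mem_iUnion₂.mp (hcov hz)
  refine mem_iUnion₂.mpr ⟨f x, Finset.mem_image_of_mem f hx, ?_⟩
  calc d (f x) (f z) ≤ φ (d x z) := hf x z
    _ ≤ φ r := hφ (le_of_lt hxz)
    _ < r' := hrr'

theorem SMchi_image_le_of_subset_iUnion_ball (hφ : Monotone φ)
    (hf : ∀ x y, d (f x) (f y) ≤ φ (d x y)) {r : NNReal} {s : Finset X}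
    (hcov : H ⊆ ⋃ x ∈ s, SMBall d x r) : SMchi d (f '' H) ≤ φ r := by
  classical
  refine le_of_forall_gt fun e he => ?_
  obtain ⟨r', hr', hr'e⟩ := ENNReal.lt_iff_exists_nnreal_btwn.mp he
  have hr'pos : 0 < r' := pos_of_gt (ENNReal.coe_lt_coe.mp hr')
  calc SMchi d (f '' H) ≤ r' :=
        SMchi_le_of_subset_iUnion_ball hr'pos
          (image_subset_iUnion_ball hφ hf (ENNReal.coe_lt_coe.mp hr') hcov)
    _ < e := hr'e

theorem SMchi_image_le (hφ : Monotone φ) (hφr : SMRightCont φ)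
    (hf : ∀ x y, d (f x) (f y) ≤ φ (d x y)) (hH : SMchi d H < ⊤) :
    SMchi d (f '' H) ≤ φ (SMchi d H).toNNReal := by
  set c := (SMchi d H).toNNReal
  have hc : (c : ENNReal) = SMchi d H := ENNReal.coe_toNNReal hH.ne
  refine le_of_forall_gt fun e he => ?_
  have hev : ∀ᶠ t in 𝓝[≥] c, (φ t : ENNReal) < e :=
    (ENNReal.continuous_coe.continuousAt.comp_continuousWithinAt (hφr c)).eventually
      (gt_mem_nhds he)
  obtain ⟨b, hcb, hb⟩ :=
    (nhdsGE_basis_of_exists_gt ⟨c + 1, lt_add_one c⟩).eventually_iff.mp hev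
  obtain ⟨r, hr, hrb, s, hcov⟩ :=
    exists_cover_of_SMchi_lt (b := b) (by rw [← hc, ENNReal.coe_lt_coe]; exact hcb)
  have hcr : c ≤ r := by
    rw [← ENNReal.coe_le_coe, hc]
    exact SMchi_le_of_subset_iUnion_ball hr hcov
  exact (SMchi_image_le_of_subset_iUnion_ball hφ hf hcov).trans_lt
    (hb ⟨hcr, ENNReal.coe_lt_coe.mp hrb⟩)

end Covers

theorem stmt9_general {X : Type*} (d : X → X → NNReal)
    (φ : NNReal → NNReal) (hφ : SMComparison φ) (hφr : SMRightCont φ)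
    (f : X → X) (hf : ∀ x y, d (f x) (f y) ≤ φ (d x y))
    (H : Set X) (h0 : 0 < SMchi d H) (h1 : SMchi d H < ⊤) :
    SMchi d (f '' H) < SMchi d H := by
  have hc : ((SMchi d H).toNNReal : ENNReal) = SMchi d H := ENNReal.coe_toNNReal h1.ne
  have hcpos : 0 < (SMchi d H).toNNReal := ENNReal.toNNReal_pos h0.ne' h1.ne
  calc SMchi d (f '' H) ≤ φ (SMchi d H).toNNReal := SMchi_image_le hφ.1 hφr hf h1
    _ < (SMchi d H).toNNReal := ENNReal.coe_lt_coe.mpr (hφ.apply_lt hcpos)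
    _ = SMchi d H := hc

theorem stmt9 {X : Type*} (d : X → X → NNReal) (hd : IsSemiMetric d)
    (φ : NNReal → NNReal) (hφ : SMComparison φ) (hφr : SMRightCont φ)
    (f : X → X) (hf : ∀ x y, d (f x) (f y) ≤ φ (d x y))
    (H : Set X) (h0 : 0 < SMchi d H) (h1 : SMchi d H < ⊤) :
    SMchi d (f '' H) < SMchi d H :=
  stmt9_general d φ hφ hφr f hf H h0 h1
end
end

section
/- Let (X,d) be a semi-metric space with right-continuous comparison functions φ₁,…,φₙ and maps f₁,…,fₙ where each fᵢ is a φᵢ-contraction. Set φ := max φᵢ. Then for all non-empty bounded sets A, B ⊆ X (assuming X normal and regular), d_HP(∪ᵢ fᵢ(A), ∪ᵢ fᵢ(B)) ≤ φ(d_HP(A,B)), and each fᵢ maps bounded sets to bounded sets. -/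
open Filter Topology Set

noncomputable section

/-!
Normality makes the Hausdorff-Pompeiu distance `t` of two non-empty bounded sets finite. If every
point of `A` is within `r` of `B` and vice versa, then every point `fᵢ a` is within `φᵢ r` of
`fᵢ '' B` and vice versa, so `d_HP(⋃ fᵢ(A), ⋃ fᵢ(B)) ≤ maxᵢ φᵢ r` for every admissible `r > t`.
Admissible radii come arbitrarily close to `t` from above, so right continuity of the `φᵢ` lets
`r ↓ t`.
-/

section SemiMetric

variable {X Y : Type*} {d : X → X → NNReal} {e : Y → Y → NNReal}

theorem mem_SMnbhd {A : Set X} {r : NNReal} {y : X} :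
    y ∈ SMnbhd d A r ↔ ∃ x ∈ A, d x y < r := by
  simp [SMnbhd, SMBall]

theorem SMdHP_le_of_subset_SMnbhd {A B : Set X} {r : NNReal} (hr : 0 < r)
    (hAB : A ⊆ SMnbhd d B r) (hBA : B ⊆ SMnbhd d A r) : SMdHP d A B ≤ r :=
  sInf_le ⟨r, rfl, hr, hAB, hBA⟩

theorem exists_radius_of_SMdHP_lt {A B : Set X} {u : NNReal} (h : SMdHP d A B < u) :
    ∃ r : NNReal, SMdHP d A B ≤ r ∧ r < u ∧ A ⊆ SMnbhd d B r ∧ B ⊆ SMnbhd d A r := by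
  obtain ⟨_, ⟨r, rfl, hr, hAB, hBA⟩, hru⟩ := sInf_lt_iff.mp h
  exact ⟨r, SMdHP_le_of_subset_SMnbhd hr hAB hBA, ENNReal.coe_lt_coe.mp hru, hAB, hBA⟩

theorem coe_le_SMPhi {u v : NNReal} {x y z : X} (hx : d x z ≤ u) (hy : d y z ≤ v) :
    (d x y : ENNReal) ≤ SMPhi d u v :=
  le_iSup₂_of_le (x, y) ⟨z, hx, hy⟩ le_rfl

theorem SMBounded.exists_forall_le (hsymm : ∀ x y, d x y = d y x) (hnorm : SMNormal d)
    {A : Set X} (hA : SMBounded d A) (p : X) : ∃ C : NNReal, ∀ a ∈ A, d p a ≤ C := by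
  obtain ⟨x₀, r, hA⟩ := hA
  refine ⟨(SMPhi d (d p x₀) r).toNNReal, fun a ha => ?_⟩
  have hax : d a x₀ ≤ r := (hsymm a x₀).trans_le (hA ha).le
  exact ENNReal.le_toNNReal_of_coe_le (coe_le_SMPhi le_rfl hax) (hnorm _ _).ne

theorem SMBounded.image {A : Set X} (hA : SMBounded d A) {g : X → Y} {ψ : NNReal → NNReal}
    (hψ : Monotone ψ) (hg : ∀ x y, e (g x) (g y) ≤ ψ (d x y)) : SMBounded e (g '' A) := by
  obtain ⟨x₀, r, hA⟩ := hA
  refine ⟨g x₀, ψ r + 1, ?_⟩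
  rintro _ ⟨a, ha, rfl⟩
  exact ((hg x₀ a).trans (hψ (hA ha).le)).trans_lt (lt_add_one _)

theorem SMdHP_lt_top (hsymm : ∀ x y, d x y = d y x) (hnorm : SMNormal d) {A B : Set X}
    (hA : A.Nonempty) (hAb : SMBounded d A) (hB : B.Nonempty) (hBb : SMBounded d B) :
    SMdHP d A B < ⊤ := by
  obtain ⟨a₀, ha₀⟩ := hA
  obtain ⟨b₀, hb₀⟩ := hB
  obtain ⟨CA, hCA⟩ := hAb.exists_forall_le hsymm hnorm b₀
  obtain ⟨CB, hCB⟩ := hBb.exists_forall_le hsymm hnorm a₀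
  refine (SMdHP_le_of_subset_SMnbhd (r := max CA CB + 1) (by positivity) ?_ ?_).trans_lt
    ENNReal.coe_lt_top
  · exact fun a ha => mem_SMnbhd.mpr
      ⟨b₀, hb₀, ((hCA a ha).trans (le_max_left _ _)).trans_lt (lt_add_one _)⟩
  · exact fun b hb => mem_SMnbhd.mpr
      ⟨a₀, ha₀, ((hCB b hb).trans (le_max_right _ _)).trans_lt (lt_add_one _)⟩

theorem iUnion_image_subset_SMnbhd {ι : Type*} {φ : ι → NNReal → NNReal} {f : ι → X → Y}
    (hφ : ∀ i, Monotone (φ i)) (hf : ∀ i x y, e (f i x) (f i y) ≤ φ i (d x y))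
    {A B : Set X} {r R : NNReal} (hAB : A ⊆ SMnbhd d B r) (hR : ∀ i, φ i r < R) :
    ⋃ i, f i '' A ⊆ SMnbhd e (⋃ i, f i '' B) R :=
  iUnion_subset fun i => image_subset_iff.mpr fun a ha => by
    obtain ⟨b, hb, hba⟩ := mem_SMnbhd.mp (hAB ha)
    exact mem_SMnbhd.mpr ⟨f i b, mem_iUnion.mpr ⟨i, mem_image_of_mem _ hb⟩,
      ((hf i b a).trans (hφ i hba.le)).trans_lt (hR i)⟩

end SemiMetric

theorem exists_gt_forall_lt_of_continuousWithinAt_Ici {ι α β : Type*} [Finite ι]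
    [TopologicalSpace α] [LinearOrder α] [OrderTopology α] [NoMaxOrder α]
    [TopologicalSpace β] [LinearOrder β] [OrderTopology β]
    {φ : ι → α → β} {t : α} {c : β} (hφ : ∀ i, ContinuousWithinAt (φ i) (Ici t) t)
    (hlt : ∀ i, φ i t < c) : ∃ u, t < u ∧ ∀ s ∈ Ico t u, ∀ i, φ i s < c :=
  (nhdsGE_basis t).mem_iff.mp <|
    eventually_all.mpr fun i => (hφ i).eventually (gt_mem_nhds (hlt i))

theorem SMdHP_iUnion_image_le {X Y ι : Type*} [Fintype ι] {d : X → X → NNReal}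
    {e : Y → Y → NNReal} {φ : ι → NNReal → NNReal} {f : ι → X → Y}
    (hφmono : ∀ i, Monotone (φ i)) (hφcont : ∀ i, SMRightCont (φ i))
    (hf : ∀ i x y, e (f i x) (f i y) ≤ φ i (d x y)) {A B : Set X} (hAB : SMdHP d A B < ⊤) :
    SMdHP e (⋃ i, f i '' A) (⋃ i, f i '' B) ≤
      ((Finset.univ.sup fun i => φ i (SMdHP d A B).toNNReal : NNReal) : ENNReal) := by
  set t := (SMdHP d A B).toNNReal
  set M := Finset.univ.sup fun i => φ i t
  refine ENNReal.le_of_forall_pos_le_add fun ε hε _ => ?_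
  obtain ⟨u, htu, hu⟩ := exists_gt_forall_lt_of_continuousWithinAt_Ici
    (fun i => hφcont i t) (c := M + ε)
    fun i => (Finset.le_sup (f := fun i => φ i t) (Finset.mem_univ i)).trans_lt
      (lt_add_of_pos_right _ hε)
  have hAB_lt_u : SMdHP d A B < u := by
    rw [← ENNReal.coe_toNNReal hAB.ne]
    exact ENNReal.coe_lt_coe.mpr htu
  obtain ⟨r, hr, hru, hABr, hBAr⟩ := exists_radius_of_SMdHP_lt hAB_lt_u
  have htr : t ≤ r := by simpa using ENNReal.toNNReal_mono ENNReal.coe_ne_top hr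
  have hφr : ∀ i, φ i r < M + ε := hu r ⟨htr, hru⟩
  calc SMdHP e (⋃ i, f i '' A) (⋃ i, f i '' B) ≤ ((M + ε : NNReal) : ENNReal) :=
        SMdHP_le_of_subset_SMnbhd (by positivity) (iUnion_image_subset_SMnbhd hφmono hf hABr hφr)
          (iUnion_image_subset_SMnbhd hφmono hf hBAr hφr)
    _ = M + ε := ENNReal.coe_add ..

theorem stmt12_general {X : Type*} (d : X → X → NNReal) (hd : IsSemiMetric d)
    (hnorm : SMNormal d)
    {n : ℕ}
    (φ : Fin n → NNReal → NNReal)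
    (hφ : ∀ i, SMComparison (φ i) ∧ SMRightCont (φ i))
    (f : Fin n → X → X) (hf : ∀ i x y, d (f i x) (f i y) ≤ φ i (d x y))
    (A B : Set X) (hA : A.Nonempty) (hAb : SMBounded d A)
    (hB : B.Nonempty) (hBb : SMBounded d B) :
    (∀ i, SMBounded d (f i '' A)) ∧
    SMdHP d (⋃ i, f i '' A) (⋃ i, f i '' B) ≤
      ((Finset.univ.sup fun i => φ i ((SMdHP d A B).toNNReal) : NNReal) : ENNReal) :=
  ⟨fun i => hAb.image (hφ i).1.1 (hf i),
    SMdHP_iUnion_image_le (fun i => (hφ i).1.1) (fun i => (hφ i).2) hf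
      (SMdHP_lt_top hd.1 hnorm hA hAb hB hBb)⟩

theorem stmt12 {X : Type*} (d : X → X → NNReal) (hd : IsSemiMetric d)
    (hnorm : SMNormal d) (hreg : SMRegular d)
    {n : ℕ} (hn : 0 < n)
    (φ : Fin n → NNReal → NNReal)
    (hφ : ∀ i, SMComparison (φ i) ∧ SMRightCont (φ i))
    (f : Fin n → X → X) (hf : ∀ i x y, d (f i x) (f i y) ≤ φ i (d x y))
    (A B : Set X) (hA : A.Nonempty) (hAb : SMBounded d A)
    (hB : B.Nonempty) (hBb : SMBounded d B) :
    (∀ i, SMBounded d (f i '' A)) ∧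
    SMdHP d (⋃ i, f i '' A) (⋃ i, f i '' B) ≤
      ((Finset.univ.sup fun i => φ i ((SMdHP d A B).toNNReal) : NNReal) : ENNReal) :=
  stmt12_general d hd hnorm φ hφ f hf A B hA hAb hB hBb
end
end
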